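/- arXiv:2204.09449 — 5 statements merged into one kernel-verified Lean document; each statement's English description precedes it below -/
import Mathlib

section
/- Let U be an open neighborhood of 0 in ℂ² and let f : ℂ² → ℂ² be holomorphic (complex analytic) on U with f(0) = 0 and Fréchet derivative Df(0) equal to the identity. Assume that for every x ∈ U one has f(x) ∈ U and f(f(x)) = x. Then there is a neighborhood V of 0 such that f(x) = x for all x ∈ V. In other words, a holomorphic involution of (ℂ²,0) tangent to the identity is the identity. -/
/-!
The midpoint map `g x = (x + f x) / 2` has derivative the identity at the fixed point, so by the
inverse function theorem it is injective near it; since `f` is an involution, `g ∘ f = g`, hence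
`f x = x` near the fixed point.
-/

open Filter Topology

section

variable {𝕜 E : Type*} [NontriviallyNormedField 𝕜] [NeZero (2 : 𝕜)]
  [NormedAddCommGroup E] [NormedSpace 𝕜 E]

theorem HasStrictFDerivAt.half_smul_id_add {f : E → E} {a : E}
    (hf : HasStrictFDerivAt f (ContinuousLinearMap.id 𝕜 E) a) :
    HasStrictFDerivAt (fun x => (2 : 𝕜)⁻¹ • (x + f x))
      ((ContinuousLinearEquiv.refl 𝕜 E : E ≃L[𝕜] E) : E →L[𝕜] E) a := by
  have hhalf : (2 : 𝕜)⁻¹ • (ContinuousLinearMap.id 𝕜 E + ContinuousLinearMap.id 𝕜 E) =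
      ContinuousLinearMap.id 𝕜 E := by
    rw [← two_smul 𝕜 (ContinuousLinearMap.id 𝕜 E), smul_smul, inv_mul_cancel₀ two_ne_zero,
      one_smul]
  rw [ContinuousLinearEquiv.coe_refl, ← hhalf]
  exact ((hasStrictFDerivAt_id a).add hf).const_smul (2 : 𝕜)⁻¹

theorem HasStrictFDerivAt.eventuallyEq_id_of_involutive [CompleteSpace E] {f : E → E} {a : E}
    (hf : HasStrictFDerivAt f (ContinuousLinearMap.id 𝕜 E) a) (ha : f a = a)
    (hinv : ∀ᶠ x in 𝓝 a, f (f x) = x) : f =ᶠ[𝓝 a] id := by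
  have hg := hf.half_smul_id_add
  have hf_tendsto : Tendsto f (𝓝 a) (𝓝 a) := by
    simpa only [ha] using hf.continuousAt.tendsto
  filter_upwards [hinv, hg.eventually_left_inverse,
    hf_tendsto.eventually hg.eventually_left_inverse] with x hx hleft hleft_f
  rw [hx, add_comm] at hleft_f
  exact hleft_f.symm.trans hleft

end

theorem holomorphic_involution_tangent_to_identity_is_identity_general
    (U : Set (ℂ × ℂ)) (hU : IsOpen U) (h0 : (0 : ℂ × ℂ) ∈ U)
    (f : ℂ × ℂ → ℂ × ℂ) (hf : AnalyticOnNhd ℂ f U)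
    (hf0 : f 0 = 0) (hdf : fderiv ℂ f 0 = ContinuousLinearMap.id ℂ (ℂ × ℂ))
    (hinv : ∀ x ∈ U, f (f x) = x) :
    ∃ V ∈ nhds (0 : ℂ × ℂ), ∀ x ∈ V, f x = x := by
  have hstrict : HasStrictFDerivAt f (ContinuousLinearMap.id ℂ (ℂ × ℂ)) 0 :=
    hdf ▸ (hf 0 h0).hasStrictFDerivAt
  have hinv_near : ∀ᶠ x in 𝓝 0, f (f x) = x := eventually_of_mem (hU.mem_nhds h0) hinv
  exact ⟨_, hstrict.eventuallyEq_id_of_involutive hf0 hinv_near, fun _ hx => hx⟩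

/-- A holomorphic involution of `(ℂ², 0)` tangent to the identity is the
identity on a neighborhood of `0`. -/
theorem holomorphic_involution_tangent_to_identity_is_identity
    (U : Set (ℂ × ℂ)) (hU : IsOpen U) (h0 : (0 : ℂ × ℂ) ∈ U)
    (f : ℂ × ℂ → ℂ × ℂ) (hf : AnalyticOnNhd ℂ f U)
    (hf0 : f 0 = 0) (hdf : fderiv ℂ f 0 = ContinuousLinearMap.id ℂ (ℂ × ℂ))
    (hmaps : ∀ x ∈ U, f x ∈ U) (hinv : ∀ x ∈ U, f (f x) = x) :
    ∃ V ∈ nhds (0 : ℂ × ℂ), ∀ x ∈ V, f x = x :=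
  holomorphic_involution_tangent_to_identity_is_identity_general U hU h0 f hf hf0 hdf hinv
end

section
/- Let λ ∈ ℂ with |λ| = 1, let Λ = diag(λ, λ⁻¹) and σ = [[0,1],[1,0]] in M₂(ℂ), and for a matrix B write B̄ for its entrywise complex conjugate. Suppose A ∈ M₂(ℂ) satisfies A·Ā = 1 and σ·A·σ·Ā = Λ. Then there exist μ ∈ ℂ with μ² = λ and an invertible matrix M ∈ M₂(ℂ) such that M⁻¹·A·M̄ = diag(μ⁻¹, μ). Equivalently, the antiholomorphic map ξ ↦ A·ξ̄ of ℂ² is linearly conjugate to ξ ↦ Λ^{-1/2}·ξ̄, where Λ^{1/2} = diag(μ, μ⁻¹). -/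
/-!
Over `ℂ / ℝ`, Hilbert's theorem 90 for `GL_n` turns the cocycle condition `A Ā = 1` into a
coboundary: for every `X`, the matrix `P = X + A X̄` satisfies `A P̄ = P`, and for `X = c • 1`
it is invertible as soon as `-c / c̄` avoids the finitely many eigenvalues of `A`. Then
`A = P P̄⁻¹`, so conjugating by `M = P · diag(ν, ν⁻¹)`, where `ν⁴ = λ` and `|ν| = 1`, gives
`M⁻¹ A M̄ = diag(ν̄ / ν, ν / ν̄) = diag(μ⁻¹, μ)` with `μ = ν²`.
-/

open Matrix ComplexConjugate

namespace Complex

lemma injective_neg_div_conj_one_add_ofReal_mul_I :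
    Function.Injective fun s : ℝ ↦ -(1 + s * I) / conj (1 + s * I) := by
  intro s u h
  have hconj (t : ℝ) : conj (1 + t * I) = 1 - t * I := by simp [sub_eq_add_neg]
  have hne (t : ℝ) : (1 : ℂ) - t * I ≠ 0 := fun h0 ↦ by simpa using congrArg re h0
  simp only [hconj] at h
  rw [div_eq_div_iff (hne s) (hne u)] at h
  have : ((s - u : ℝ) : ℂ) * (2 * I) = 0 := by push_cast; linear_combination -h
  simpa [sub_eq_zero, I_ne_zero] using this

end Complex

namespace Matrix

variable {n : Type*} [Fintype n] [DecidableEq n]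

lemma mul_map_conj_add_mul_map_conj {A : Matrix n n ℂ} (hA : A * A.map conj = 1)
    (X : Matrix n n ℂ) : A * (X + A * X.map conj).map conj = X + A * X.map conj := by
  rw [Matrix.map_add conj (map_add conj), Matrix.map_mul, map_map, Matrix.mul_add,
    ← Matrix.mul_assoc, hA, Matrix.one_mul, add_comm]
  ext
  simp

lemma isUnit_smul_one_add_conj_smul {A : Matrix n n ℂ} {c : ℂ} (hc : c ≠ 0)
    (hA : -c / conj c ∉ spectrum ℂ A) : IsUnit (c • 1 + conj c • A) := by
  have hc' : conj c ≠ 0 := (map_ne_zero conj).mpr hc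
  have hscale : -conj c * (-c / conj c) = c := by field_simp
  rw [spectrum.notMem_iff, Algebra.algebraMap_eq_smul_one] at hA
  convert hA.smul (Units.mk0 _ (neg_ne_zero.mpr hc')) using 1
  rw [Units.smul_def, Units.val_mk0, smul_sub, smul_smul, hscale, neg_smul, sub_neg_eq_add]

lemma exists_isUnit_smul_one_add_conj_smul (A : Matrix n n ℂ) :
    ∃ c : ℂ, IsUnit (c • 1 + conj c • A) := by
  obtain ⟨s, hs⟩ := (A.finite_spectrum.preimage
    Complex.injective_neg_div_conj_one_add_ofReal_mul_I.injOn).exists_notMem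
  refine ⟨1 + s * Complex.I, isUnit_smul_one_add_conj_smul (fun h ↦ ?_) hs⟩
  simpa using congrArg Complex.re h

theorem exists_isUnit_mul_map_conj_eq {A : Matrix n n ℂ} (hA : A * A.map conj = 1) :
    ∃ P : Matrix n n ℂ, IsUnit P ∧ A * P.map conj = P := by
  obtain ⟨c, hc⟩ := exists_isUnit_smul_one_add_conj_smul A
  have hX : c • 1 + A * (c • (1 : Matrix n n ℂ)).map conj = c • 1 + conj c • A := by
    rw [Matrix.map_smul' conj c 1 (map_mul conj),
      Matrix.map_one conj (map_zero conj) (map_one conj)]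
    simp
  have hAX := mul_map_conj_add_mul_map_conj hA (c • 1)
  rw [hX] at hAX
  exact ⟨_, hc, hAX⟩

lemma inv_mul_mul_map_conj_of_mul_map_conj_eq {A P : Matrix n n ℂ} (hP : IsUnit P)
    (hAP : A * P.map conj = P) (Q : Matrix n n ℂ) :
    (P * Q)⁻¹ * A * (P * Q).map conj = Q⁻¹ * Q.map conj := by
  rw [Matrix.mul_inv_rev, Matrix.map_mul, Matrix.mul_assoc, ← Matrix.mul_assoc A, hAP,
    Matrix.mul_assoc, ← Matrix.mul_assoc P⁻¹,
    Matrix.nonsing_inv_mul P ((isUnit_iff_isUnit_det P).mp hP), Matrix.one_mul]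

lemma inv_diagonal_mul_map_conj {d : n → ℂ} (hd : ∀ i, d i ≠ 0) :
    (diagonal d)⁻¹ * (diagonal d).map conj = diagonal fun i ↦ conj (d i) / d i := by
  have hinv : (diagonal d)⁻¹ = diagonal fun i ↦ (d i)⁻¹ :=
    inv_eq_left_inv (by simp [diagonal_mul_diagonal, hd])
  rw [hinv, diagonal_map (map_zero conj), diagonal_mul_diagonal]
  simp_rw [div_eq_inv_mul]

end Matrix

theorem antiholomorphic_involution_linear_normal_form_general
    (l : ℂ) (hl : ‖l‖ = 1)
    (A : Matrix (Fin 2) (Fin 2) ℂ)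
    (hinv : A * A.map (starRingEnd ℂ) = 1) :
    ∃ (μ : ℂ) (M : Matrix (Fin 2) (Fin 2) ℂ), μ ^ 2 = l ∧ IsUnit M ∧
      M⁻¹ * A * M.map (starRingEnd ℂ) = Matrix.diagonal ![μ⁻¹, μ] := by
  obtain ⟨ν, hν⟩ := IsAlgClosed.exists_pow_nat_eq l (n := 4) (by norm_num)
  have hν1 : ‖ν‖ = 1 := by
    rw [← pow_left_inj₀ (norm_nonneg ν) zero_le_one four_ne_zero, ← norm_pow, hν, hl, one_pow]
  obtain ⟨P, hP, hAP⟩ := exists_isUnit_mul_map_conj_eq hinv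
  have hν0 : ν ≠ 0 := norm_ne_zero_iff.mp (hν1 ▸ one_ne_zero)
  have hd : ∀ i, ![ν, ν⁻¹] i ≠ 0 := by
    intro i; fin_cases i <;> simp [hν0]
  refine ⟨ν ^ 2, P * diagonal ![ν, ν⁻¹], by rw [← pow_mul, hν], hP.mul ?_, ?_⟩
  · exact isUnit_diagonal.mpr (Pi.isUnit_iff.mpr fun i ↦ (hd i).isUnit)
  rw [inv_mul_mul_map_conj_of_mul_map_conj_eq hP hAP, inv_diagonal_mul_map_conj hd]
  congr 1
  ext i; fin_cases i <;> simp [← Complex.inv_eq_conj hν1, sq, div_eq_mul_inv]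

/-- an antiholomorphic linear involution `ξ ↦ A ξ̄` with
`σ A σ Ā = Λ = diag(λ, λ⁻¹)`, `|λ| = 1`, is linearly conjugate to
`ξ ↦ diag(μ⁻¹, μ) ξ̄` for some square root `μ` of `λ`. -/
theorem antiholomorphic_involution_linear_normal_form
    (l : ℂ) (hl : ‖l‖ = 1)
    (Λ σ : Matrix (Fin 2) (Fin 2) ℂ)
    (hΛ : Λ = Matrix.diagonal ![l, l⁻¹]) (hσ : σ = !![0, 1; 1, 0])
    (A : Matrix (Fin 2) (Fin 2) ℂ)
    (hinv : A * A.map (starRingEnd ℂ) = 1)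
    (hcomp : σ * A * σ * A.map (starRingEnd ℂ) = Λ) :
    ∃ (μ : ℂ) (M : Matrix (Fin 2) (Fin 2) ℂ), μ ^ 2 = l ∧ IsUnit M ∧
      M⁻¹ * A * M.map (starRingEnd ℂ) = Matrix.diagonal ![μ⁻¹, μ] :=
  antiholomorphic_involution_linear_normal_form_general l hl A hinv
end

section
/- Let T₁, T₂ ∈ M₂(ℂ) be linear reflections, i.e. T₁² = T₂² = 1 and T₁, T₂ ∉ {1, −1}. Suppose the product T₁·T₂ is conjugate in M₂(ℂ) to the diagonal matrix diag(λ, λ⁻¹) for some λ ∈ ℂ with λ ≠ 1. Then there exist g ∈ ℂ with g² = λ + λ⁻¹ + 2 and an invertible matrix P ∈ M₂(ℂ) such that P⁻¹·T₁·P = [[1,0],[−g,−1]] and P⁻¹·T₂·P = [[−1,−g],[0,1]]. -/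
/-!
Let `S = T₁ T₂` and `t = λ + λ⁻¹`. Since `T₂ T₁ = S⁻¹` and `S` is conjugate to `diag(λ, λ⁻¹)`,
`T₁ T₂ + T₂ T₁ = t`. Pick `p` with `T₂ p = -p`. The vectors `p`, `T₁ p` are independent: otherwise
`p` is an eigenvector of `T₁`, with eigenvalue `±1`, hence of `S` with eigenvalue `∓1`, forcing
`λ = ±1`. In the basis `(p, T₁ p)` the reflections become `[[0,1],[1,0]]` and `[[-1,t],[0,1]]`,
and the basis `(p, (p - T₁ p)/g)` with `g² = t + 2` gives the normal form; this needs `g ≠ 0`,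
i.e. `λ ≠ -1`. When `λ = -1`, `T₂ = -T₁` and `g = 0`, so an eigenbasis of `T₁` does the job.
-/

open Matrix

namespace Matrix

variable {n R K : Type*} [Fintype n] [DecidableEq n]

theorem exists_ne_zero_mulVec_eq_neg [Ring R] {A : Matrix n n R} (hA : A * A = 1) (h1 : A ≠ 1) :
    ∃ v ≠ 0, A *ᵥ v = -v := by
  obtain ⟨j, hj⟩ : ∃ j, (A - 1).col j ≠ 0 := by
    by_contra! h
    exact h1 (sub_eq_zero.mp (ext fun i j => congrFun (h j) i))
  refine ⟨(A - 1).col j, hj, ?_⟩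
  rw [← mulVec_single_one, mulVec_mulVec, ← neg_mulVec, mul_sub, hA, mul_one, neg_sub]

theorem eq_mul_mul_inv_of_inv_mul_mul_eq [CommRing R] {Q S D : Matrix n n R} (hQ : IsUnit Q)
    (h : Q⁻¹ * S * Q = D) : S = Q * D * Q⁻¹ := by
  have hQ' := (isUnit_iff_isUnit_det Q).mp hQ
  rw [← h, mul_assoc, mul_assoc, mul_nonsing_inv _ hQ', mul_one]
  exact (mul_nonsing_inv_cancel_left (A := Q) S hQ').symm

theorem eq_smul_one_of_inv_mul_mul_eq_diagonal [CommRing R] {Q S : Matrix n n R} (hQ : IsUnit Q)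
    {c : R} (h : Q⁻¹ * S * Q = diagonal fun _ => c) : S = c • 1 := by
  rw [eq_mul_mul_inv_of_inv_mul_mul_eq hQ h, ← smul_one_eq_diagonal, mul_smul_comm, mul_one,
    smul_mul_assoc, mul_nonsing_inv _ ((isUnit_iff_isUnit_det Q).mp hQ)]

theorem inv_mul_mul_eq_of_mul_eq [CommRing R] {P T M : Matrix n n R} (hP : IsUnit P)
    (h : T * P = P * M) : P⁻¹ * T * P = M := by
  rw [mul_assoc, h, ← mul_assoc, nonsing_inv_mul _ ((isUnit_iff_isUnit_det P).mp hP), one_mul]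

theorem exists_eq_of_inv_mul_mul_eq_diagonal [CommRing R] [IsDomain R] {S Q : Matrix n n R}
    {d : n → R} (hQ : IsUnit Q) (hS : Q⁻¹ * S * Q = diagonal d) {v : n → R} (hv : v ≠ 0) {μ : R}
    (h : S *ᵥ v = μ • v) : ∃ i, d i = μ := by
  have hQ' := (isUnit_iff_isUnit_det Q).mp hQ
  have hw : Q⁻¹ *ᵥ v ≠ 0 := by
    intro h0
    rw [← one_mulVec v, ← mul_nonsing_inv _ hQ', ← mulVec_mulVec, h0, mulVec_zero] at hv
    exact hv rfl
  have hDw : diagonal d *ᵥ (Q⁻¹ *ᵥ v) = μ • (Q⁻¹ *ᵥ v) := by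
    rw [← hS, mulVec_mulVec, mul_assoc, mul_nonsing_inv _ hQ', mul_one, ← mulVec_mulVec, h,
      mulVec_smul]
  obtain ⟨i, hi⟩ := Function.ne_iff.mp hw
  refine ⟨i, mul_right_cancel₀ hi ?_⟩
  simpa [mulVec_diagonal] using congrFun hDw i

theorem mul_transpose_of_mulVec_eq [CommRing R] {T : Matrix (Fin 2) (Fin 2) R}
    {u v : Fin 2 → R} {a b c d : R} (hu : T *ᵥ u = a • u + c • v)
    (hv : T *ᵥ v = b • u + d • v) :
    T * (of ![u, v])ᵀ = (of ![u, v])ᵀ * !![a, b; c, d] := by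
  ext i j
  fin_cases j
  · simpa [mul_apply, mulVec, dotProduct, mul_comm] using congrFun hu i
  · simpa [mul_apply, mulVec, dotProduct, mul_comm] using congrFun hv i

theorem inv_mul_mul_eq_of_linearIndependent [Field K] {T : Matrix (Fin 2) (Fin 2) K}
    {u v : Fin 2 → K} (huv : LinearIndependent K ![u, v]) {a b c d : K}
    (hu : T *ᵥ u = a • u + c • v) (hv : T *ᵥ v = b • u + d • v) :
    ((of ![u, v])ᵀ)⁻¹ * T * (of ![u, v])ᵀ = !![a, b; c, d] :=
  inv_mul_mul_eq_of_mul_eq (linearIndependent_cols_iff_isUnit.mp huv)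
    (mul_transpose_of_mulVec_eq hu hv)

end Matrix

section Reflections

variable {K : Type*} [Field K]

theorem exists_inv_mul_mul_eq_diag_of_mul_self_eq_one [NeZero (2 : K)]
    {T : Matrix (Fin 2) (Fin 2) K} (hT : T * T = 1) (h₁ : T ≠ 1) (h₂ : T ≠ -1) :
    ∃ P, IsUnit P ∧ P⁻¹ * T * P = !![1, 0; 0, -1] := by
  obtain ⟨u, hu0, hu⟩ := exists_ne_zero_mulVec_eq_neg (A := -T) (by simpa using hT)
    fun h => h₂ (by rw [← h, neg_neg])
  obtain ⟨v, hv0, hv⟩ := exists_ne_zero_mulVec_eq_neg hT h₁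
  rw [neg_mulVec, neg_inj] at hu
  have huv : LinearIndependent K ![u, v] := by
    refine (LinearIndependent.pair_iff' hu0).mpr fun a hav => hv0 ?_
    have : v = -v := by rw [← hv, ← hav, mulVec_smul, hu]
    simpa [eq_neg_iff_add_eq_zero, ← two_smul K, two_ne_zero] using this
  exact ⟨_, linearIndependent_cols_iff_isUnit.mp huv,
    inv_mul_mul_eq_of_linearIndependent huv (by simp [hu]) (by simp [hv])⟩

theorem exists_inv_mul_mul_eq_diag_of_mul_eq_neg_one [NeZero (2 : K)]
    {T₁ T₂ : Matrix (Fin 2) (Fin 2) K} (h₁ : T₁ * T₁ = 1) (hne₁ : T₁ ≠ 1) (hne₂ : T₁ ≠ -1)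
    (hS : T₁ * T₂ = -1) :
    ∃ P, IsUnit P ∧ P⁻¹ * T₁ * P = !![1, 0; 0, -1] ∧ P⁻¹ * T₂ * P = !![-1, 0; 0, 1] := by
  have hT₂ : T₂ = -T₁ := by rw [← one_mul T₂, ← h₁, mul_assoc, hS, mul_neg_one]
  obtain ⟨P, hP, hT₁P⟩ := exists_inv_mul_mul_eq_diag_of_mul_self_eq_one h₁ hne₁ hne₂
  refine ⟨P, hP, hT₁P, ?_⟩
  rw [hT₂, mul_neg, neg_mul, hT₁P]
  simp

theorem ne_zero_of_inv_mul_mul_eq_diagonal {T₁ T₂ Q : Matrix (Fin 2) (Fin 2) K} {l : K}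
    (h₁ : T₁ * T₁ = 1) (h₂ : T₂ * T₂ = 1) (hQ : IsUnit Q)
    (hD : Q⁻¹ * (T₁ * T₂) * Q = diagonal ![l, l⁻¹]) : l ≠ 0 := by
  rintro rfl
  have hS : T₁ * T₂ = (0 : K) • 1 := eq_smul_one_of_inv_mul_mul_eq_diagonal hQ (by
    rw [hD]; congr 1; ext i; fin_cases i <;> simp)
  have hT₂ : T₂ = 0 := by rw [← one_mul T₂, ← h₁, mul_assoc, hS, zero_smul, mul_zero]
  simp [hT₂] at h₂

theorem mul_add_mul_eq_smul_one {T₁ T₂ Q : Matrix (Fin 2) (Fin 2) K} {l : K}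
    (h₁ : T₁ * T₁ = 1) (h₂ : T₂ * T₂ = 1) (hQ : IsUnit Q) (hl : l ≠ 0)
    (hD : Q⁻¹ * (T₁ * T₂) * Q = diagonal ![l, l⁻¹]) :
    T₁ * T₂ + T₂ * T₁ = (l + l⁻¹) • 1 := by
  have hQ' := (isUnit_iff_isUnit_det Q).mp hQ
  have hS := eq_mul_mul_inv_of_inv_mul_mul_eq hQ hD
  have hDD : diagonal ![l, l⁻¹] * diagonal ![l⁻¹, l] = 1 := by
    rw [diagonal_mul_diagonal, ← diagonal_one]
    congr 1
    ext i; fin_cases i <;> simp [hl]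
  have hR : T₂ * T₁ = Q * diagonal ![l⁻¹, l] * Q⁻¹ := by
    have hleft : T₂ * T₁ * (T₁ * T₂) = 1 := by rw [mul_assoc, ← mul_assoc T₁, h₁, one_mul, h₂]
    have hright : T₁ * T₂ * (Q * diagonal ![l⁻¹, l] * Q⁻¹) = 1 := by
      rw [hS, show Q * diagonal ![l, l⁻¹] * Q⁻¹ * (Q * diagonal ![l⁻¹, l] * Q⁻¹) =
          Q * diagonal ![l, l⁻¹] * (Q⁻¹ * Q) * diagonal ![l⁻¹, l] * Q⁻¹ by simp only [mul_assoc],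
        nonsing_inv_mul _ hQ', mul_one, mul_assoc Q, hDD, mul_one, mul_nonsing_inv _ hQ']
    exact (inv_eq_left_inv hleft).symm.trans (inv_eq_right_inv hright)
  rw [hS, hR, ← add_mul, ← mul_add, diagonal_add]
  have : (fun i => ![l, l⁻¹] i + ![l⁻¹, l] i) = fun _ => l + l⁻¹ := by
    ext i; fin_cases i <;> simp [add_comm]
  rw [this, ← smul_one_eq_diagonal, mul_smul_comm, mul_one, smul_mul_assoc,
    mul_nonsing_inv _ hQ']

theorem exists_sq_eq_add_inv_add_two [IsAlgClosed K] {l : K} (hl₀ : l ≠ 0) (hl : l ≠ -1) :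
    ∃ g ≠ 0, g ^ 2 = l + l⁻¹ + 2 := by
  obtain ⟨g, hg⟩ := IsAlgClosed.exists_pow_nat_eq (l + l⁻¹ + 2) two_pos
  refine ⟨g, ?_, hg⟩
  rintro rfl
  have : (l + 1) ^ 2 = l * (l + l⁻¹ + 2) := by field_simp; ring
  rw [← hg, zero_pow two_ne_zero, mul_zero, sq_eq_zero_iff] at this
  exact hl (eq_neg_of_add_eq_zero_left this)

theorem exists_conj_normalForm {g t : K} (hg : g ≠ 0) (hgt : g ^ 2 = t + 2) :
    ∃ C : Matrix (Fin 2) (Fin 2) K, IsUnit C ∧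
      C⁻¹ * !![0, 1; 1, 0] * C = !![1, 0; -g, -1] ∧
      C⁻¹ * !![-1, t; 0, 1] * C = !![-1, -g; 0, 1] := by
  -- the columns of `C` are the coordinates of `p` and `(p - T₁ p) / g` in the basis `(p, T₁ p)`
  have hinv : (!![1, g⁻¹; 0, -g⁻¹] : Matrix (Fin 2) (Fin 2) K)⁻¹ = !![1, 1; 0, -g] :=
    inv_eq_left_inv (by simp [hg, one_fin_two])
  refine ⟨!![1, g⁻¹; 0, -g⁻¹], ?_, ?_, ?_⟩
  · simp [isUnit_iff_isUnit_det, det_fin_two, hg]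
  all_goals
    rw [hinv, mul_fin_two, mul_fin_two]
    ext i j
    fin_cases i <;> fin_cases j <;> simp [field]
  linear_combination hgt

theorem linearIndependent_mulVec_of_reflections {T₁ T₂ Q : Matrix (Fin 2) (Fin 2) K} {l : K}
    (hl₁ : l ≠ 1) (hl₂ : l ≠ -1) (h₁ : T₁ * T₁ = 1) (hQ : IsUnit Q)
    (hD : Q⁻¹ * (T₁ * T₂) * Q = diagonal ![l, l⁻¹]) {p : Fin 2 → K} (hp0 : p ≠ 0)
    (hp : T₂ *ᵥ p = -p) : LinearIndependent K ![p, T₁ *ᵥ p] := by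
  refine (LinearIndependent.pair_iff' hp0).mpr fun ε hε => ?_
  have hε2 : (-ε) ^ 2 = 1 := by
    have : (ε ^ 2) • p = (1 : K) • p := by
      rw [one_smul, sq, ← smul_smul, hε, ← mulVec_smul, hε, mulVec_mulVec, h₁, one_mulVec]
    rw [neg_sq]
    exact smul_left_injective K hp0 this
  have hS : (T₁ * T₂) *ᵥ p = (-ε) • p := by
    rw [← mulVec_mulVec, hp, mulVec_neg, ← hε, neg_smul]
  obtain ⟨i, hi⟩ := exists_eq_of_inv_mul_mul_eq_diagonal hQ hD hp0 hS
  have hl : l ^ 2 = 1 := by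
    fin_cases i
    · simpa [← hi] using hε2
    · simpa [← hi] using hε2
  rcases sq_eq_one_iff.mp hl with h | h
  exacts [hl₁ h, hl₂ h]

theorem exists_inv_mul_mul_eq_normalForm {T₁ T₂ : Matrix (Fin 2) (Fin 2) K} {t g : K}
    (h₁ : T₁ * T₁ = 1) (hanti : T₁ * T₂ + T₂ * T₁ = t • 1) (hg : g ≠ 0) (hgt : g ^ 2 = t + 2)
    {p : Fin 2 → K} (hp : T₂ *ᵥ p = -p) (hind : LinearIndependent K ![p, T₁ *ᵥ p]) :
    ∃ P, IsUnit P ∧ P⁻¹ * T₁ * P = !![1, 0; -g, -1] ∧ P⁻¹ * T₂ * P = !![-1, -g; 0, 1] := by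
  set q := T₁ *ᵥ p
  have hT₁q : T₁ *ᵥ q = p := by rw [mulVec_mulVec, h₁, one_mulVec]
  have hT₂q : T₂ *ᵥ q = t • p + q := by
    rw [mulVec_mulVec, eq_sub_of_add_eq' hanti, sub_mulVec, ← mulVec_mulVec, hp, mulVec_neg,
      smul_mulVec, one_mulVec, sub_neg_eq_add]
  obtain ⟨C, hC, hC₁, hC₂⟩ := exists_conj_normalForm hg hgt
  have conj_mul (T : Matrix (Fin 2) (Fin 2) K) :
      ((of ![p, q])ᵀ * C)⁻¹ * T * ((of ![p, q])ᵀ * C) =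
        C⁻¹ * (((of ![p, q])ᵀ)⁻¹ * T * (of ![p, q])ᵀ) * C := by
    simp only [Matrix.mul_inv_rev, mul_assoc]
  refine ⟨(of ![p, q])ᵀ * C, (linearIndependent_cols_iff_isUnit.mp hind).mul hC, ?_, ?_⟩
  · rw [conj_mul, inv_mul_mul_eq_of_linearIndependent hind (a := 0) (b := 1) (c := 1) (d := 0)
      (by simp [q]) (by simp [hT₁q]), hC₁]
  · rw [conj_mul, inv_mul_mul_eq_of_linearIndependent hind (a := -1) (b := t) (c := 0) (d := 1)
      (by simp [hp]) (by simp [hT₂q]), hC₂]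

end Reflections

theorem pair_of_reflections_normal_form_general
    (T₁ T₂ : Matrix (Fin 2) (Fin 2) ℂ)
    (hT₁ : T₁ ^ 2 = 1) (hT₂ : T₂ ^ 2 = 1)
    (hT₁ne : T₁ ≠ 1) (hT₁ne' : T₁ ≠ -1) (hT₂ne : T₂ ≠ 1)
    (l : ℂ) (hl : l ≠ 1)
    (hconj : ∃ Q : Matrix (Fin 2) (Fin 2) ℂ, IsUnit Q ∧
      Q⁻¹ * (T₁ * T₂) * Q = Matrix.diagonal ![l, l⁻¹]) :
    ∃ (g : ℂ) (P : Matrix (Fin 2) (Fin 2) ℂ), g ^ 2 = l + l⁻¹ + 2 ∧ IsUnit P ∧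
      P⁻¹ * T₁ * P = !![1, 0; -g, -1] ∧ P⁻¹ * T₂ * P = !![-1, -g; 0, 1] := by
  obtain ⟨Q, hQ, hD⟩ := hconj
  rw [sq] at hT₁ hT₂
  by_cases hl₂ : l = -1
  · subst hl₂
    have hS : T₁ * T₂ = -1 := by
      simpa using eq_smul_one_of_inv_mul_mul_eq_diagonal hQ (c := -1) (by
        rw [hD]; congr 1; ext i; fin_cases i <;> simp)
    obtain ⟨P, hP, hT₁P, hT₂P⟩ := exists_inv_mul_mul_eq_diag_of_mul_eq_neg_one hT₁ hT₁ne hT₁ne' hS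
    exact ⟨0, P, by norm_num, hP, by simpa using hT₁P, by simpa using hT₂P⟩
  · obtain ⟨p, hp0, hp⟩ := exists_ne_zero_mulVec_eq_neg hT₂ hT₂ne
    have hl₀ := ne_zero_of_inv_mul_mul_eq_diagonal hT₁ hT₂ hQ hD
    obtain ⟨g, hg0, hg⟩ := exists_sq_eq_add_inv_add_two hl₀ hl₂
    have hanti := mul_add_mul_eq_smul_one hT₁ hT₂ hQ hl₀ hD
    obtain ⟨P, hP⟩ := exists_inv_mul_mul_eq_normalForm hT₁ hanti hg0 hg hp
      (linearIndependent_mulVec_of_reflections hl hl₂ hT₁ hQ hD hp0 hp)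
    exact ⟨g, P, hg, hP⟩

/-- a pair of linear reflections of `ℂ²` whose product is conjugate to
`diag(λ, λ⁻¹)` with `λ ≠ 1` can be simultaneously conjugated to the Moser–Webster
normal forms `[[1,0],[-g,-1]]`, `[[-1,-g],[0,1]]` with `g² = λ + λ⁻¹ + 2`. -/
theorem pair_of_reflections_normal_form
    (T₁ T₂ : Matrix (Fin 2) (Fin 2) ℂ)
    (hT₁ : T₁ ^ 2 = 1) (hT₂ : T₂ ^ 2 = 1)
    (hT₁ne : T₁ ≠ 1) (hT₁ne' : T₁ ≠ -1) (hT₂ne : T₂ ≠ 1) (hT₂ne' : T₂ ≠ -1)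
    (l : ℂ) (hl : l ≠ 1)
    (hconj : ∃ Q : Matrix (Fin 2) (Fin 2) ℂ, IsUnit Q ∧
      Q⁻¹ * (T₁ * T₂) * Q = Matrix.diagonal ![l, l⁻¹]) :
    ∃ (g : ℂ) (P : Matrix (Fin 2) (Fin 2) ℂ), g ^ 2 = l + l⁻¹ + 2 ∧ IsUnit P ∧
      P⁻¹ * T₁ * P = !![1, 0; -g, -1] ∧ P⁻¹ * T₂ * P = !![-1, -g; 0, 1] :=
  pair_of_reflections_normal_form_general T₁ T₂ hT₁ hT₂ hT₁ne hT₁ne' hT₂ne l hl hconj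
end

section
/- Let U ⊆ ℂ² and let Φ, Ξ : ℂ² → ℂ² be maps with Φ(U) ⊆ U, Ξ(U) ⊆ U, Ξ(Φ(ξ)) = ξ and Φ(Ξ(ξ)) = ξ for all ξ ∈ U. Let σ(ξ₁, ξ₂) := (ξ₂, ξ₁) and assume σ(U) ⊆ U. Suppose Φ preserves h(ξ) := ξ₁·ξ₂, i.e. (Φξ)₁·(Φξ)₂ = ξ₁·ξ₂ for all ξ ∈ U, and that σ(Φ(σ(ξ))) = Ξ(ξ) for all ξ ∈ U. Define f(η) := ((Φη)₁ − η₁)/η₁. Then for every ξ ∈ U with ξ₂ ≠ 0 and (Ξξ)₁ ≠ 0 one has f(σ(ξ)) = f(Ξ(ξ)). -/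
/-!
Reversibility gives `(Φ (σ ξ))₁ = (Ξ ξ)₂`, so `f (σ ξ) = (Ξ ξ)₂ / ξ₂ - 1` and
`f (Ξ ξ) = ξ₁ / (Ξ ξ)₁ - 1`; these agree because `Ξ`, as the inverse of `Φ`, also preserves `ξ₁ ξ₂`.
-/

theorem Set.RightInvOn.apply_eq_of_invariant {α β : Type*} {U : Set α} {Φ Ξ : α → α}
    {g : α → β} (hright : Set.RightInvOn Ξ Φ U) (hΞU : Set.MapsTo Ξ U U)
    (hg : ∀ ξ ∈ U, g (Φ ξ) = g ξ) : ∀ ξ ∈ U, g (Ξ ξ) = g ξ := fun ξ hξ => by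
  rw [← hg _ (hΞU hξ), hright hξ]

theorem sub_div_eq_sub_div_of_mul_eq_mul {K : Type*} [Field K] {a b x y : K}
    (h : x * y = a * b) (hy : y ≠ 0) (ha : a ≠ 0) : (b - y) / y = (x - a) / a := by
  field_simp
  linear_combination -h

theorem fixed_point_generator_sigma_identity_general
    (U : Set (ℂ × ℂ)) (Φ Ξ : ℂ × ℂ → ℂ × ℂ)
    (hΞU : ∀ ξ ∈ U, Ξ ξ ∈ U)
    (hright : ∀ ξ ∈ U, Φ (Ξ ξ) = ξ)
    (σ : ℂ × ℂ → ℂ × ℂ) (hσ : ∀ ξ : ℂ × ℂ, σ ξ = (ξ.2, ξ.1))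
    (hh : ∀ ξ ∈ U, (Φ ξ).1 * (Φ ξ).2 = ξ.1 * ξ.2)
    (hrev : ∀ ξ ∈ U, σ (Φ (σ ξ)) = Ξ ξ)
    (f : ℂ × ℂ → ℂ) (hf : ∀ η : ℂ × ℂ, f η = ((Φ η).1 - η.1) / η.1) :
    ∀ ξ ∈ U, ξ.2 ≠ 0 → (Ξ ξ).1 ≠ 0 → f (σ ξ) = f (Ξ ξ) := by
  intro ξ hξ hξ₂ hΞξ₁
  have hswap : (Φ (ξ.2, ξ.1)).1 = (Ξ ξ).2 := by
    simpa [hσ] using congrArg Prod.snd (hrev ξ hξ)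
  have hΞh : (Ξ ξ).1 * (Ξ ξ).2 = ξ.1 * ξ.2 :=
    Set.RightInvOn.apply_eq_of_invariant (g := fun η : ℂ × ℂ => η.1 * η.2) hright
      (fun η hη => hΞU η hη) hh ξ hξ
  rw [hf, hf, hσ, hright ξ hξ, hswap]
  exact sub_div_eq_sub_div_of_mul_eq_mul hΞh.symm hξ₂ hΞξ₁

/-- for a map `Φ` preserving `h(ξ) = ξ₁ξ₂` with inverse `Ξ` on `U`, reversed
by the swap `σ`, the function `f(η) = ((Φη)₁ − η₁)/η₁` satisfies `f ∘ σ = f ∘ Ξ`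
wherever defined. -/
theorem fixed_point_generator_sigma_identity
    (U : Set (ℂ × ℂ)) (Φ Ξ : ℂ × ℂ → ℂ × ℂ)
    (hΦU : ∀ ξ ∈ U, Φ ξ ∈ U) (hΞU : ∀ ξ ∈ U, Ξ ξ ∈ U)
    (hleft : ∀ ξ ∈ U, Ξ (Φ ξ) = ξ) (hright : ∀ ξ ∈ U, Φ (Ξ ξ) = ξ)
    (σ : ℂ × ℂ → ℂ × ℂ) (hσ : ∀ ξ : ℂ × ℂ, σ ξ = (ξ.2, ξ.1)) (hσU : ∀ ξ ∈ U, σ ξ ∈ U)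
    (hh : ∀ ξ ∈ U, (Φ ξ).1 * (Φ ξ).2 = ξ.1 * ξ.2)
    (hrev : ∀ ξ ∈ U, σ (Φ (σ ξ)) = Ξ ξ)
    (f : ℂ × ℂ → ℂ) (hf : ∀ η : ℂ × ℂ, f η = ((Φ η).1 - η.1) / η.1) :
    ∀ ξ ∈ U, ξ.2 ≠ 0 → (Ξ ξ).1 ≠ 0 → f (σ ξ) = f (Ξ ξ) :=
  fixed_point_generator_sigma_identity_general U Φ Ξ hΞU hright σ hσ hh hrev f hf
end

section
/- Let s be a positive integer, a ∈ ℂ, and β : ℂ → ℂ a nowhere-vanishing function satisfying conj(β(conj h)) = β(h)⁻¹ for all h ∈ ℂ. For ξ = (ξ₁, ξ₂) ∈ ℂ², set h := ξ₁·ξ₂ and define ψ(ξ) := ( ((β(h)⁻¹ + a·h^s·ξ₁)/(1 + conj(a)·h^s·β(h)⁻¹·ξ₂))·ξ₁ , ((β(h) + conj(a)·h^s·ξ₂)/(1 + a·h^s·β(h)·ξ₁))·ξ₂ ). Then, at every point where the denominators involved are nonzero: (1) the two components of ψ(ξ) multiply to ξ₁·ξ₂, i.e. h ∘ ψ = h;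 (2) conj(ψ(conj ξ₁, conj ξ₂)) = σ(ψ(ξ₂, ξ₁)), where σ(η₁, η₂) = (η₂, η₁). -/
/-! Both identities are pure algebra. For `h ∘ ψ = h`, after clearing denominators it remains
`(β⁻¹ + u)(β + v) = (1 + vβ⁻¹)(1 + uβ)`, which holds because `β⁻¹β = 1`. The reality condition
`ψ̄ = σ ∘ ψ ∘ σ` follows by pushing `conj` through the rational expression: the hypothesis on `β`
turns `conj β` into `β⁻¹`, which swaps the roles of the two components. -/

lemma div_mul_mul_div_mul_eq_mul {K : Type*} [Field K] {n₁ d₁ n₂ d₂ : K} (x y : K)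
    (h₁ : d₁ ≠ 0) (h₂ : d₂ ≠ 0) (h : n₁ * n₂ = d₁ * d₂) :
    n₁ / d₁ * x * (n₂ / d₂ * y) = x * y := by
  field_simp
  linear_combination x * y * h

lemma inv_add_mul_add_eq {K : Type*} [Field K] {b : K} (hb : b ≠ 0) (u v : K) :
    (b⁻¹ + u) * (b + v) = (1 + v * b⁻¹) * (1 + u * b) := by
  linear_combination (1 - u * v) * mul_inv_cancel₀ hb

theorem divergence_example_map_general
    (s : ℕ) (a : ℂ) (β : ℂ → ℂ)
    (hβ0 : ∀ h : ℂ, β h ≠ 0)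
    (hβ : ∀ h : ℂ, starRingEnd ℂ (β (starRingEnd ℂ h)) = (β h)⁻¹)
    (ψ : ℂ × ℂ → ℂ × ℂ)
    (hψ : ∀ ξ : ℂ × ℂ,
      ψ ξ = ((((β (ξ.1 * ξ.2))⁻¹ + a * (ξ.1 * ξ.2) ^ s * ξ.1) /
              (1 + starRingEnd ℂ a * (ξ.1 * ξ.2) ^ s * (β (ξ.1 * ξ.2))⁻¹ * ξ.2)) * ξ.1,
             ((β (ξ.1 * ξ.2) + starRingEnd ℂ a * (ξ.1 * ξ.2) ^ s * ξ.2) /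
              (1 + a * (ξ.1 * ξ.2) ^ s * β (ξ.1 * ξ.2) * ξ.1)) * ξ.2)) :
    (∀ ξ : ℂ × ℂ,
      1 + starRingEnd ℂ a * (ξ.1 * ξ.2) ^ s * (β (ξ.1 * ξ.2))⁻¹ * ξ.2 ≠ 0 →
      1 + a * (ξ.1 * ξ.2) ^ s * β (ξ.1 * ξ.2) * ξ.1 ≠ 0 →
      (ψ ξ).1 * (ψ ξ).2 = ξ.1 * ξ.2) ∧
    (∀ ξ₁ ξ₂ : ℂ,
      1 + starRingEnd ℂ a * (ξ₂ * ξ₁) ^ s * (β (ξ₂ * ξ₁))⁻¹ * ξ₁ ≠ 0 →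
      1 + a * (ξ₂ * ξ₁) ^ s * β (ξ₂ * ξ₁) * ξ₂ ≠ 0 →
      1 + starRingEnd ℂ a * (starRingEnd ℂ ξ₁ * starRingEnd ℂ ξ₂) ^ s *
          (β (starRingEnd ℂ ξ₁ * starRingEnd ℂ ξ₂))⁻¹ * starRingEnd ℂ ξ₂ ≠ 0 →
      1 + a * (starRingEnd ℂ ξ₁ * starRingEnd ℂ ξ₂) ^ s *
          β (starRingEnd ℂ ξ₁ * starRingEnd ℂ ξ₂) * starRingEnd ℂ ξ₁ ≠ 0 →
      (starRingEnd ℂ (ψ (starRingEnd ℂ ξ₁, starRingEnd ℂ ξ₂)).1,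
        starRingEnd ℂ (ψ (starRingEnd ℂ ξ₁, starRingEnd ℂ ξ₂)).2) =
      ((ψ (ξ₂, ξ₁)).2, (ψ (ξ₂, ξ₁)).1)) := by
  constructor
  · rintro ⟨ξ₁, ξ₂⟩ hden₁ hden₂
    rw [hψ]
    refine div_mul_mul_div_mul_eq_mul ξ₁ ξ₂ hden₁ hden₂ ?_
    set t := (ξ₁ * ξ₂) ^ s
    linear_combination inv_add_mul_add_eq (hβ0 (ξ₁ * ξ₂)) (a * t * ξ₁) (starRingEnd ℂ a * t * ξ₂)
  · intro ξ₁ ξ₂ _ _ _ _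
    have hβ_conj : starRingEnd ℂ (β (starRingEnd ℂ ξ₁ * starRingEnd ℂ ξ₂)) = (β (ξ₁ * ξ₂))⁻¹ := by
      rw [← map_mul, hβ]
    rw [hψ, hψ, mul_comm ξ₂ ξ₁]
    simp only [map_mul, map_add, map_div₀, map_pow, map_inv₀, map_one, hβ_conj,
      Complex.conj_conj, inv_inv]

/-- the explicit rational map `ψ` built from `β` (with
`conj (β (conj h)) = (β h)⁻¹`) preserves `h = ξ₁ξ₂` and satisfies `ψ̄ = σ ∘ ψ ∘ σ`
wherever the denominators involved do not vanish. -/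
theorem divergence_example_map
    (s : ℕ) (hs : 0 < s) (a : ℂ) (β : ℂ → ℂ)
    (hβ0 : ∀ h : ℂ, β h ≠ 0)
    (hβ : ∀ h : ℂ, starRingEnd ℂ (β (starRingEnd ℂ h)) = (β h)⁻¹)
    (ψ : ℂ × ℂ → ℂ × ℂ)
    (hψ : ∀ ξ : ℂ × ℂ,
      ψ ξ = ((((β (ξ.1 * ξ.2))⁻¹ + a * (ξ.1 * ξ.2) ^ s * ξ.1) /
              (1 + starRingEnd ℂ a * (ξ.1 * ξ.2) ^ s * (β (ξ.1 * ξ.2))⁻¹ * ξ.2)) * ξ.1,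
             ((β (ξ.1 * ξ.2) + starRingEnd ℂ a * (ξ.1 * ξ.2) ^ s * ξ.2) /
              (1 + a * (ξ.1 * ξ.2) ^ s * β (ξ.1 * ξ.2) * ξ.1)) * ξ.2)) :
    (∀ ξ : ℂ × ℂ,
      1 + starRingEnd ℂ a * (ξ.1 * ξ.2) ^ s * (β (ξ.1 * ξ.2))⁻¹ * ξ.2 ≠ 0 →
      1 + a * (ξ.1 * ξ.2) ^ s * β (ξ.1 * ξ.2) * ξ.1 ≠ 0 →
      (ψ ξ).1 * (ψ ξ).2 = ξ.1 * ξ.2) ∧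
    (∀ ξ₁ ξ₂ : ℂ,
      1 + starRingEnd ℂ a * (ξ₂ * ξ₁) ^ s * (β (ξ₂ * ξ₁))⁻¹ * ξ₁ ≠ 0 →
      1 + a * (ξ₂ * ξ₁) ^ s * β (ξ₂ * ξ₁) * ξ₂ ≠ 0 →
      1 + starRingEnd ℂ a * (starRingEnd ℂ ξ₁ * starRingEnd ℂ ξ₂) ^ s *
          (β (starRingEnd ℂ ξ₁ * starRingEnd ℂ ξ₂))⁻¹ * starRingEnd ℂ ξ₂ ≠ 0 →
      1 + a * (starRingEnd ℂ ξ₁ * starRingEnd ℂ ξ₂) ^ s *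
          β (starRingEnd ℂ ξ₁ * starRingEnd ℂ ξ₂) * starRingEnd ℂ ξ₁ ≠ 0 →
      (starRingEnd ℂ (ψ (starRingEnd ℂ ξ₁, starRingEnd ℂ ξ₂)).1,
        starRingEnd ℂ (ψ (starRingEnd ℂ ξ₁, starRingEnd ℂ ξ₂)).2) =
      ((ψ (ξ₂, ξ₁)).2, (ψ (ξ₂, ξ₁)).1)) :=
  divergence_example_map_general s a β hβ0 hβ ψ hψ
end
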